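/- Under the hypotheses that all singular values of S U_C lie in [√(1−ε), √(1+ε)] where U_C is an orthonormal basis of range([A;B]), for all vectors w ∈ ℝ^n and y ∈ ℝ^ℓ one has |w^T A^T B y − w^T A^T S^T S B y| ≤ ε · ‖A w‖₂ · ‖B y‖₂. -/

import Mathlib

open Matrix

theorem Matrix.isHermitian_transpose_mul_self {p q : ℕ} (X : Matrix (Fin p) (Fin q) ℝ) :
    (Xᵀ * X).IsHermitian := by
  simpa [Matrix.conjTranspose_eq_transpose_of_trivial] using
    Matrix.isHermitian_conjTranspose_mul_self X

noncomputable def svals {p q : ℕ} (X : Matrix (Fin p) (Fin q) ℝ) : Fin q → ℝ :=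
  fun i => Real.sqrt ((Matrix.isHermitian_transpose_mul_self X).eigenvalues
    (Tuple.sort ((Matrix.isHermitian_transpose_mul_self X).eigenvalues) i.rev))

noncomputable def sNorm {p q : ℕ} (X : Matrix (Fin p) (Fin q) ℝ) : ℝ :=
  ⨆ i, svals X i

/-!
Write `A w = U_C a` and `B y = U_C b`. Since `U_C` is an isometry, the claim becomes
`|a ⬝ b - a ⬝ H b| ≤ ε ‖a‖ ‖b‖` for `H = (S U_C)ᵀ (S U_C)`, whose eigenvalues are the squared
singular values of `S U_C` and hence lie in `[1 - ε, 1 + ε]`. Diagonalising `H = V D Vᵀ` with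
`V` orthogonal, `a ⬝ (1 - H) b = (Vᵀ a) ⬝ (1 - D) (Vᵀ b)`, and Cauchy–Schwarz finishes.
-/

namespace Matrix

section Orthogonal

variable {R : Type*} [CommSemiring R] {ι κ μ : Type*} [Fintype ι] [Fintype κ] [Fintype μ]

lemma dotProduct_transpose_mul_mulVec (X : Matrix ι κ R) (Y : Matrix ι μ R) (x : κ → R)
    (y : μ → R) : x ⬝ᵥ (Xᵀ * Y) *ᵥ y = (X *ᵥ x) ⬝ᵥ (Y *ᵥ y) := by
  rw [← mulVec_mulVec, dotProduct_mulVec, vecMul_transpose]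

lemma mulVec_dotProduct_mulVec_of_transpose_mul_self_eq_one [DecidableEq κ] {U : Matrix ι κ R}
    (hU : Uᵀ * U = 1) (a b : κ → R) : (U *ᵥ a) ⬝ᵥ (U *ᵥ b) = a ⬝ᵥ b := by
  rw [← dotProduct_transpose_mul_mulVec, hU, one_mulVec]

end Orthogonal

variable {ι : Type*} [Fintype ι] [DecidableEq ι]

lemma abs_dotProduct_diagonal_mulVec_le {d : ι → ℝ} {ε : ℝ} (hε : 0 ≤ ε) (hd : ∀ i, |d i| ≤ ε)
    (a b : ι → ℝ) : |a ⬝ᵥ diagonal d *ᵥ b| ≤ ε * √(a ⬝ᵥ a) * √(b ⬝ᵥ b) := by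
  have hsq : ∀ v : ι → ℝ, v ⬝ᵥ v = ∑ i, |v i| ^ 2 := fun v => by
    simp only [dotProduct, sq, abs_mul_abs_self]
  calc |a ⬝ᵥ diagonal d *ᵥ b| = |∑ i, d i * (a i * b i)| := by
        simp only [mulVec_diagonal, dotProduct, mul_left_comm]
    _ ≤ ∑ i, |d i| * (|a i| * |b i|) :=
        (Finset.abs_sum_le_sum_abs _ _).trans_eq (by simp only [abs_mul])
    _ ≤ ∑ i, ε * (|a i| * |b i|) := by gcongr with i; exact hd i
    _ ≤ ε * (√(a ⬝ᵥ a) * √(b ⬝ᵥ b)) := by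
        rw [← Finset.mul_sum, hsq a, hsq b]
        gcongr
        exact Real.sum_mul_le_sqrt_mul_sqrt _ _ _
    _ = ε * √(a ⬝ᵥ a) * √(b ⬝ᵥ b) := (mul_assoc _ _ _).symm

namespace IsHermitian

variable {H : Matrix ι ι ℝ} (hH : H.IsHermitian)

lemma eigenvectorUnitary_mul_transpose :
    (hH.eigenvectorUnitary : Matrix ι ι ℝ) * (hH.eigenvectorUnitary : Matrix ι ι ℝ)ᵀ = 1 := by
  simpa [star_eq_conjTranspose] using
    Matrix.mem_unitaryGroup_iff.mp hH.eigenvectorUnitary.2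

lemma eq_eigenvectorUnitary_mul_diagonal_mul_transpose :
    H = (hH.eigenvectorUnitary : Matrix ι ι ℝ) * diagonal hH.eigenvalues *
      (hH.eigenvectorUnitary : Matrix ι ι ℝ)ᵀ := by
  simpa [Unitary.conjStarAlgAut_apply, star_eq_conjTranspose] using hH.spectral_theorem

lemma abs_dotProduct_sub_dotProduct_mulVec_le {ε : ℝ} (hε : 0 ≤ ε)
    (hev : ∀ i, |hH.eigenvalues i - 1| ≤ ε) (a b : ι → ℝ) :
    |a ⬝ᵥ b - a ⬝ᵥ H *ᵥ b| ≤ ε * √(a ⬝ᵥ a) * √(b ⬝ᵥ b) := by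
  set V := (hH.eigenvectorUnitary : Matrix ι ι ℝ)ᵀ
  have hV : Vᵀ * V = 1 := by
    simpa [V] using hH.eigenvectorUnitary_mul_transpose
  have hHV : H = Vᵀ * (diagonal hH.eigenvalues * V) := by
    conv_lhs => rw [hH.eq_eigenvectorUnitary_mul_diagonal_mul_transpose]
    rw [transpose_transpose, Matrix.mul_assoc]
  have hsub : 1 - H = Vᵀ * (diagonal (1 - hH.eigenvalues) * V) :=
    calc 1 - H = Vᵀ * (1 * V) - Vᵀ * (diagonal hH.eigenvalues * V) := by
          rw [Matrix.one_mul, hV, ← hHV]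
      _ = Vᵀ * (diagonal (1 - hH.eigenvalues) * V) := by
          rw [← Matrix.mul_sub, ← Matrix.sub_mul, ← diagonal_one, diagonal_sub]; rfl
  have hdiag : ∀ i, |(1 - hH.eigenvalues) i| ≤ ε := fun i => by
    simpa only [Pi.sub_apply, Pi.one_apply, abs_sub_comm] using hev i
  calc |a ⬝ᵥ b - a ⬝ᵥ H *ᵥ b| = |(V *ᵥ a) ⬝ᵥ diagonal (1 - hH.eigenvalues) *ᵥ (V *ᵥ b)| := by
        rw [mulVec_mulVec, ← dotProduct_transpose_mul_mulVec, ← hsub, sub_mulVec, one_mulVec,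
          dotProduct_sub]
    _ ≤ ε * √((V *ᵥ a) ⬝ᵥ (V *ᵥ a)) * √((V *ᵥ b) ⬝ᵥ (V *ᵥ b)) :=
        abs_dotProduct_diagonal_mulVec_le hε hdiag _ _
    _ = ε * √(a ⬝ᵥ a) * √(b ⬝ᵥ b) := by
        rw [mulVec_dotProduct_mulVec_of_transpose_mul_self_eq_one hV,
          mulVec_dotProduct_mulVec_of_transpose_mul_self_eq_one hV]

end IsHermitian

end Matrix

lemma exists_svals_eq_sqrt_eigenvalues {p q : ℕ} (X : Matrix (Fin p) (Fin q) ℝ) (j : Fin q) :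
    ∃ i, svals X i = √((isHermitian_transpose_mul_self X).eigenvalues j) :=
  ⟨(Tuple.sort (isHermitian_transpose_mul_self X).eigenvalues)⁻¹ j |>.rev, by simp [svals]⟩

lemma abs_eigenvalues_transpose_mul_self_sub_one_le {p q : ℕ} {X : Matrix (Fin p) (Fin q) ℝ}
    {ε : ℝ} (hε : 0 ≤ ε)
    (hsv : ∀ i, √(1 - ε) ≤ svals X i ∧ svals X i ≤ √(1 + ε)) (j : Fin q) :
    |(isHermitian_transpose_mul_self X).eigenvalues j - 1| ≤ ε := by
  have hnonneg : 0 ≤ (isHermitian_transpose_mul_self X).eigenvalues j := by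
    have hpsd : (Xᵀ * X).PosSemidef := by
      simpa only [conjTranspose_eq_transpose_of_trivial] using posSemidef_conjTranspose_mul_self X
    exact hpsd.eigenvalues_nonneg j
  obtain ⟨i, hi⟩ := exists_svals_eq_sqrt_eigenvalues X j
  obtain ⟨hlow, hhigh⟩ := hsv i
  rw [hi] at hlow hhigh
  rw [Real.sqrt_le_sqrt_iff hnonneg] at hlow
  rw [Real.sqrt_le_sqrt_iff (by linarith)] at hhigh
  exact abs_le.mpr ⟨by linarith, by linarith⟩

lemma abs_dotProduct_sub_mulVec_dotProduct_mulVec_le {p q : ℕ} {X : Matrix (Fin p) (Fin q) ℝ}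
    {ε : ℝ} (hε : 0 ≤ ε)
    (hsv : ∀ i, √(1 - ε) ≤ svals X i ∧ svals X i ≤ √(1 + ε)) (a b : Fin q → ℝ) :
    |a ⬝ᵥ b - (X *ᵥ a) ⬝ᵥ (X *ᵥ b)| ≤ ε * √(a ⬝ᵥ a) * √(b ⬝ᵥ b) := by
  rw [← dotProduct_transpose_mul_mulVec]
  exact (isHermitian_transpose_mul_self X).abs_dotProduct_sub_dotProduct_mulVec_le hε
    (abs_eigenvalues_transpose_mul_self_sub_one_le hε hsv) a b

theorem stmt9_general {m n ℓ ω r : ℕ}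
    (A : Matrix (Fin m) (Fin n) ℝ) (B : Matrix (Fin m) (Fin ℓ) ℝ)
    (UC : Matrix (Fin m) (Fin ω) ℝ) (S : Matrix (Fin r) (Fin m) ℝ)
    (hUC : UCᵀ * UC = 1)
    (hrC : LinearMap.range UC.mulVecLin = LinearMap.range (Matrix.fromCols A B).mulVecLin)
    (ε : ℝ) (hε0 : 0 < ε)
    (hsv : ∀ i, Real.sqrt (1 - ε) ≤ svals (S * UC) i ∧ svals (S * UC) i ≤ Real.sqrt (1 + ε))
    (w : Fin n → ℝ) (y : Fin ℓ → ℝ) :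
    |w ⬝ᵥ (Aᵀ * B).mulVec y - w ⬝ᵥ (Aᵀ * Sᵀ * S * B).mulVec y| ≤
      ε * Real.sqrt (A.mulVec w ⬝ᵥ A.mulVec w) * Real.sqrt (B.mulVec y ⬝ᵥ B.mulVec y) := by
  obtain ⟨a, ha : UC *ᵥ a = A *ᵥ w⟩ : A *ᵥ w ∈ LinearMap.range UC.mulVecLin :=
    hrC ▸ ⟨Sum.elim w 0, by simp⟩
  obtain ⟨b, hb : UC *ᵥ b = B *ᵥ y⟩ : B *ᵥ y ∈ LinearMap.range UC.mulVecLin :=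
    hrC ▸ ⟨Sum.elim 0 y, by simp⟩
  have hSAB : Aᵀ * Sᵀ * S * B = (S * A)ᵀ * (S * B) := by
    simp only [transpose_mul, Matrix.mul_assoc]
  rw [hSAB, dotProduct_transpose_mul_mulVec, dotProduct_transpose_mul_mulVec, ← mulVec_mulVec,
    ← mulVec_mulVec, ← ha, ← hb, mulVec_mulVec, mulVec_mulVec,
    mulVec_dotProduct_mulVec_of_transpose_mul_self_eq_one hUC,
    mulVec_dotProduct_mulVec_of_transpose_mul_self_eq_one hUC,
    mulVec_dotProduct_mulVec_of_transpose_mul_self_eq_one hUC]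
  exact abs_dotProduct_sub_mulVec_dotProduct_mulVec_le hε0.le hsv a b

theorem stmt9 {m n ℓ ω r : ℕ}
    (A : Matrix (Fin m) (Fin n) ℝ) (B : Matrix (Fin m) (Fin ℓ) ℝ)
    (UC : Matrix (Fin m) (Fin ω) ℝ) (S : Matrix (Fin r) (Fin m) ℝ)
    (hω : ω = (Matrix.fromCols A B).rank)
    (hUC : UCᵀ * UC = 1)
    (hrC : LinearMap.range UC.mulVecLin = LinearMap.range (Matrix.fromCols A B).mulVecLin)
    (ε : ℝ) (hε0 : 0 < ε) (hε1 : ε < 1)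
    (hsv : ∀ i, Real.sqrt (1 - ε) ≤ svals (S * UC) i ∧ svals (S * UC) i ≤ Real.sqrt (1 + ε))
    (w : Fin n → ℝ) (y : Fin ℓ → ℝ) :
    |w ⬝ᵥ (Aᵀ * B).mulVec y - w ⬝ᵥ (Aᵀ * Sᵀ * S * B).mulVec y| ≤
      ε * Real.sqrt (A.mulVec w ⬝ᵥ A.mulVec w) * Real.sqrt (B.mulVec y ⬝ᵥ B.mulVec y) :=
  stmt9_general A B UC S hUC hrC ε hε0 hsv w y
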